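/- Let K ≥ 3, τ ∈ ℝ, and let (μ_k)_{k=1}^K be a nondecreasing sequence of reals with μ_1 ≤ τ ≤ μ_K. Consider the dyadic binary tree on [K], and let u be any node of this tree. Then the set A = { v : u ∈ ST(v) and τ ∈ [μ_{v(l)}, μ_{v(r)}] } is nonempty, and it contains exactly one element of maximal depth; that is, if w, q ∈ A both have maximal depth among elements of A, then w = q. -/

import Mathlib

/-- A node of the dyadic binary tree on `[K]` is a triple `(L, M, R)` of (1-based) arm
indices. -/
abbrev TreeNode := ℕ × ℕ × ℕ

/-- Root of the dyadic binary tree on `[K]`. -/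
def treeRoot (K : ℕ) : TreeNode := (1, (1 + K) / 2, K)

/-- Left child of a node `(L, M, R)`: `(L, ⌊(L+M)/2⌋, M)`. -/
def leftChild (v : TreeNode) : TreeNode := (v.1, (v.1 + v.2.1) / 2, v.2.1)

/-- Right child of a node `(L, M, R)`: `(M, ⌊(M+R)/2⌋, R)`. -/
def rightChild (v : TreeNode) : TreeNode := (v.2.1, (v.2.1 + v.2.2) / 2, v.2.2)

/-- A node `(L, M, R)` is a leaf when `R = L + 1`. -/
def IsLeaf (v : TreeNode) : Prop := v.2.2 = v.1 + 1

/-- `Desc u v d`: `v` belongs to the subtree `ST(u)` rooted at `u`, at relative depth `d`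
(children are only taken at non-leaf nodes). -/
inductive Desc : TreeNode → TreeNode → ℕ → Prop
  | refl (u : TreeNode) : Desc u u 0
  | left {u v : TreeNode} {d : ℕ} : Desc u v d → ¬IsLeaf v → Desc u (leftChild v) (d + 1)
  | right {u v : TreeNode} {d : ℕ} : Desc u v d → ¬IsLeaf v → Desc u (rightChild v) (d + 1)

/-- The set of (node, depth) pairs `(v, d)` of the dyadic tree on `[K]` such that
`u ∈ ST(v)` and `τ ∈ [μ_{v(l)}, μ_{v(r)}]`. -/
def goodAncestors (K : ℕ) (τ : ℝ) (μ : ℕ → ℝ) (u : TreeNode) : Set (TreeNode × ℕ) :=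
  {p | Desc (treeRoot K) p.1 p.2 ∧ (∃ d', Desc p.1 u d') ∧
    μ p.1.1 ≤ τ ∧ τ ≤ μ p.1.2.2}

/-!
Nonemptiness is witnessed by the root. For uniqueness, two elements of maximal depth have the
same depth, and two ancestors of `u` at the same depth coincide: every node `(L, M, R)` below
the root satisfies `L < R` with `M` the midpoint, a descendant's interval `[L, R]` lies inside
its ancestor's, so the subtrees of the two children of a node, living in `[L, M]` and `[M, R]`,
cannot share a node. Induction on the depth finishes the argument.
-/

def ProperNode (v : TreeNode) : Prop := v.2.1 = (v.1 + v.2.2) / 2 ∧ v.1 < v.2.2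

lemma properNode_treeRoot {K : ℕ} (hK : 1 < K) : ProperNode (treeRoot K) := ⟨rfl, hK⟩

lemma properNode_leftChild {v : TreeNode} (hv : ProperNode v) (hl : ¬IsLeaf v) :
    ProperNode (leftChild v) := by
  obtain ⟨hm, hlt⟩ := hv
  unfold IsLeaf at hl
  exact ⟨rfl, by simp only [leftChild]; omega⟩

lemma properNode_rightChild {v : TreeNode} (hv : ProperNode v) :
    ProperNode (rightChild v) := by
  obtain ⟨hm, hlt⟩ := hv
  exact ⟨rfl, by simp only [rightChild]; omega⟩

namespace Desc

lemma trans {a b c : TreeNode} {d e : ℕ} (hab : Desc a b d) (hbc : Desc b c e) :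
    Desc a c (d + e) := by
  induction hbc with
  | refl => exact hab
  | left _ hl ih => exact ih.left hl
  | right _ hl ih => exact ih.right hl

lemma properNode {v w : TreeNode} {d : ℕ} (h : Desc v w d) (hv : ProperNode v) :
    ProperNode w := by
  induction h with
  | refl => exact hv
  | left _ hl ih => exact properNode_leftChild ih hl
  | right _ _ ih => exact properNode_rightChild ih

lemma interval_subset {v u : TreeNode} {d : ℕ} (h : Desc v u d) (hv : ProperNode v) :
    v.1 ≤ u.1 ∧ u.2.2 ≤ v.2.2 := by
  induction h with
  | refl => exact ⟨le_rfl, le_rfl⟩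
  | left hx _ ih =>
    obtain ⟨hm, hlt⟩ := hx.properNode hv
    exact ⟨ih.1, by simp only [leftChild]; omega⟩
  | right hx _ ih =>
    obtain ⟨hm, hlt⟩ := hx.properNode hv
    exact ⟨by simp only [rightChild]; omega, ih.2⟩

lemma exists_parent {r w : TreeNode} {d : ℕ} (h : Desc r w (d + 1)) :
    ∃ p, Desc r p d ∧ ¬IsLeaf p ∧ (w = leftChild p ∨ w = rightChild p) := by
  cases h with
  | left hp hl => exact ⟨_, hp, hl, .inl rfl⟩
  | right hp hl => exact ⟨_, hp, hl, .inr rfl⟩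

end Desc

lemma not_desc_leftChild_and_rightChild {p u : TreeNode} {a b : ℕ} (hp : ProperNode p)
    (hl : ¬IsLeaf p) (ha : Desc (leftChild p) u a) (hb : Desc (rightChild p) u b) : False := by
  have hpl := properNode_leftChild hp hl
  have hpr := properNode_rightChild hp
  obtain ⟨-, hu⟩ := ha.properNode hpl
  have hla := ha.interval_subset hpl
  have hrb := hb.interval_subset hpr
  simp only [leftChild, rightChild] at hla hrb
  omega

lemma eq_of_same_depth_of_common_descendant {r u : TreeNode} (hr : ProperNode r) :
    ∀ {d : ℕ} {w q : TreeNode}, Desc r w d → Desc r q d →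
      (∃ a, Desc w u a) → (∃ b, Desc q u b) → w = q := by
  intro d
  induction d with
  | zero =>
    intro w q hw hq _ _
    cases hw; cases hq; rfl
  | succ d ih =>
    rintro w q hw hq ⟨a, hwu⟩ ⟨b, hqu⟩
    obtain ⟨pw, hpw, hlw, hw'⟩ := hw.exists_parent
    obtain ⟨pq, hpq, hlq, hq'⟩ := hq.exists_parent
    have hchild : ∀ {p c : TreeNode}, ¬IsLeaf p → (c = leftChild p ∨ c = rightChild p) →
        Desc p c 1 := by
      rintro p c hl (rfl | rfl)
      exacts [(Desc.refl p).left hl, (Desc.refl p).right hl]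
    obtain rfl : pw = pq :=
      ih hpw hpq ⟨_, (hchild hlw hw').trans hwu⟩ ⟨_, (hchild hlq hq').trans hqu⟩
    have hp := hpw.properNode hr
    rcases hw' with rfl | rfl <;> rcases hq' with rfl | rfl
    · rfl
    · exact (not_desc_leftChild_and_rightChild hp hlw hwu hqu).elim
    · exact (not_desc_leftChild_and_rightChild hp hlw hqu hwu).elim
    · rfl

theorem unique_deepest_good_ancestor
    (K : ℕ) (hK : 3 ≤ K) (τ : ℝ) (μ : ℕ → ℝ)
    (h1 : μ 1 ≤ τ) (hKτ : τ ≤ μ K)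
    (u : TreeNode) (du : ℕ) (hu : Desc (treeRoot K) u du) :
    (goodAncestors K τ μ u).Nonempty ∧
    ∀ w q : TreeNode × ℕ,
      w ∈ goodAncestors K τ μ u → q ∈ goodAncestors K τ μ u →
      (∀ x ∈ goodAncestors K τ μ u, x.2 ≤ w.2) →
      (∀ x ∈ goodAncestors K τ μ u, x.2 ≤ q.2) →
      w = q := by
  refine ⟨⟨(treeRoot K, 0), Desc.refl _, ⟨du, hu⟩, h1, hKτ⟩, ?_⟩
  intro w q hw hq hmaxw hmaxq
  have hdepth : w.2 = q.2 := le_antisymm (hmaxq w hw) (hmaxw q hq)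
  obtain ⟨hw, hwu, -⟩ := hw
  obtain ⟨hq, hqu, -⟩ := hq
  rw [← hdepth] at hq
  exact Prod.ext (eq_of_same_depth_of_common_descendant (properNode_treeRoot (by omega)) hw hq hwu hqu)
    hdepth
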